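/- arXiv:2007.06303 — 2 statements merged into one kernel-verified Lean document; each statement's English description precedes it below -/
import Mathlib

section
/- Let φ : (0,a) → ℝ be a differentiable solution of the ODE (|φ'(s)|^(p-2) θ(s)^(N-1) φ'(s))' + λ θ(s)^(N-1) |φ(s)|^(p-2) φ(s) = 0 on (0,a), for 1 < p < ∞, where θ(s) > 0 on (0,a), λ > 0, and the boundary term satisfies lim_{s→0⁺} |φ'(s)|^(p-2) θ(s)^(N-1) φ'(s) = 0. If φ(s) > 0 on (0,a), then φ'(s) < 0 on (0,a). -/
/-! The flux `|φ'|^(p-2) θ^(N-1) φ'` has derivative `-λ θ^(N-1) φ^(p-1) < 0`, so it is strictly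
decreasing on `(0,a)`; since it tends to `0` at `0⁺` it is negative there, and its sign is that
of `φ'`. -/

open Set Filter Topology

lemma StrictAntiOn.lt_of_tendsto_nhdsGT {f : ℝ → ℝ} {b a c s : ℝ}
    (hf : StrictAntiOn f (Ioo b a)) (hlim : Tendsto f (𝓝[>] b) (𝓝 c)) (hs : s ∈ Ioo b a) :
    f s < c := by
  obtain ⟨t, hbt, hts⟩ := exists_between hs.1
  have ht : t ∈ Ioo b a := ⟨hbt, hts.trans hs.2⟩
  have hft : f t ≤ c := by
    refine ge_of_tendsto hlim ?_
    filter_upwards [Ioo_mem_nhdsGT hbt] with u hu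
    exact (hf ⟨hu.1, hu.2.trans ht.2⟩ ht hu.2).le
  exact (hf ht hs hts).trans_le hft

lemma neg_of_abs_rpow_mul_mul_neg {x c q : ℝ} (hc : 0 ≤ c) (h : |x| ^ q * c * x < 0) :
    x < 0 := by
  by_contra! hx
  exact h.not_ge (by positivity)

theorem stmt_0_general (p lam a : ℝ) (N : ℕ)
    (φ φ' θ : ℝ → ℝ)
    (hlam : 0 < lam)
    (hθpos : ∀ s ∈ Ioo 0 a, 0 < θ s)
    (hode : ∀ s ∈ Ioo 0 a,
      HasDerivAt (fun s => |φ' s| ^ (p - 2) * θ s ^ (N - 1) * φ' s)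
        (-(lam * θ s ^ (N - 1) * |φ s| ^ (p - 2) * φ s)) s)
    (hbdry : Tendsto (fun s => |φ' s| ^ (p - 2) * θ s ^ (N - 1) * φ' s)
        (nhdsWithin 0 (Ioi 0)) (nhds 0))
    (hφpos : ∀ s ∈ Ioo 0 a, 0 < φ s) :
    ∀ s ∈ Ioo 0 a, φ' s < 0 := by
  intro s hs
  have hanti : StrictAntiOn (fun s => |φ' s| ^ (p - 2) * θ s ^ (N - 1) * φ' s) (Ioo 0 a) := by
    refine strictAntiOn_of_deriv_neg (convex_Ioo 0 a)
      (fun t ht => (hode t ht).continuousAt.continuousWithinAt) fun t ht => ?_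
    rw [interior_Ioo] at ht
    have hφ := hφpos t ht
    have hθ := hθpos t ht
    rw [(hode t ht).deriv, neg_lt_zero, abs_of_pos hφ]
    positivity
  exact neg_of_abs_rpow_mul_mul_neg (pow_pos (hθpos s hs) _).le
    (hanti.lt_of_tendsto_nhdsGT hbdry hs)

/-- If `φ` solves `(|φ'|^(p-2) θ^(N-1) φ')' + λ θ^(N-1) |φ|^(p-2) φ = 0` on `(0,a)` with
`θ > 0`, `λ > 0`, `1 < p`, boundary term tending to `0` at `0⁺`, and `φ > 0` on `(0,a)`,
then `φ' < 0` on `(0,a)`. -/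
theorem stmt_0 (p lam a : ℝ) (N : ℕ) (hN : 1 ≤ N)
    (φ φ' θ : ℝ → ℝ)
    (hp : 1 < p) (hlam : 0 < lam) (ha : 0 < a)
    (hθpos : ∀ s ∈ Ioo 0 a, 0 < θ s)
    (hderiv : ∀ s ∈ Ioo 0 a, HasDerivAt φ (φ' s) s)
    (hode : ∀ s ∈ Ioo 0 a,
      HasDerivAt (fun s => |φ' s| ^ (p - 2) * θ s ^ (N - 1) * φ' s)
        (-(lam * θ s ^ (N - 1) * |φ s| ^ (p - 2) * φ s)) s)
    (hbdry : Tendsto (fun s => |φ' s| ^ (p - 2) * θ s ^ (N - 1) * φ' s)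
        (nhdsWithin 0 (Ioi 0)) (nhds 0))
    (hφpos : ∀ s ∈ Ioo 0 a, 0 < φ s) :
    ∀ s ∈ Ioo 0 a, φ' s < 0 :=
  stmt_0_general p lam a N φ φ' θ hlam hθpos hode hbdry hφpos
end

section
/- (Hardy–Littlewood inequality.) Let f, g : ℝ^N → [0,∞) be measurable functions vanishing at infinity, and let f*, g* denote their symmetric decreasing rearrangements. Then ∫_{ℝ^N} f(x) g(x) dx ≤ ∫_{ℝ^N} f*(x) g*(x) dx. -/
/-!
Write `f g` as the Lebesgue measure of the rectangle `(0, f) × (0, g)` and apply Tonelli: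
`∫ f g = ∫∫_{s, t > 0} |{f > s} ∩ {g > t}| ds dt`. For fixed `s, t` the superlevel sets of
`f*` and `g*` are concentric balls, so the measure of their intersection is the smaller of
their measures, which by equimeasurability dominates `|{f > s} ∩ {g > t}|`.
-/

open Set MeasureTheory Metric

theorem lintegral_ofReal_mul_eq_setLIntegral_measure_inter {E : Type*} [MeasurableSpace E]
    (μ : Measure E) [SFinite μ] {f g : E → ℝ} (hf : Measurable f) (hg : Measurable g)
    (hf₀ : ∀ x, 0 ≤ f x) :
    ∫⁻ x, ENNReal.ofReal (f x * g x) ∂μ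
      = ∫⁻ p in Ioi 0 ×ˢ Ioi 0, μ ({x | p.1 < f x} ∩ {x | p.2 < g x}) := by
  set Q : Set (ℝ × ℝ) := Ioi 0 ×ˢ Ioi 0
  set S : Set (E × (ℝ × ℝ)) := {q | q.2.1 < f q.1 ∧ q.2.2 < g q.1}
  have hS : MeasurableSet S :=
    (measurableSet_lt measurable_snd.fst (hf.comp measurable_fst)).inter
      (measurableSet_lt measurable_snd.snd (hg.comp measurable_fst))
  have h_rect (x : E) :
      ENNReal.ofReal (f x * g x) = volume.restrict Q (Prod.mk x ⁻¹' S) := by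
    have h_slice : Prod.mk x ⁻¹' S ∩ Q = Ioo 0 (f x) ×ˢ Ioo 0 (g x) := by
      ext p
      simp only [S, Q, mem_inter_iff, mem_preimage, mem_ofPred_eq, mem_prod, mem_Ioi, mem_Ioo]
      tauto
    rw [Measure.restrict_apply' (measurableSet_Ioi.prod measurableSet_Ioi), h_slice,
      Measure.volume_eq_prod, Measure.prod_prod, Real.volume_Ioo, Real.volume_Ioo, sub_zero,
      sub_zero, ENNReal.ofReal_mul (hf₀ x)]
  simp_rw [h_rect]
  rw [← Measure.prod_apply hS, Measure.prod_apply_symm hS]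
  rfl

theorem measure_ball_inter_ball_eq_min {X : Type*} [PseudoMetricSpace X] [MeasurableSpace X]
    (μ : Measure X) (x : X) (r₁ r₂ : ℝ) :
    μ (ball x r₁ ∩ ball x r₂) = min (μ (ball x r₁)) (μ (ball x r₂)) := by
  rcases le_total r₁ r₂ with h | h
  · rw [inter_eq_left.2 (ball_subset_ball h), min_eq_left (measure_mono (ball_subset_ball h))]
  · rw [inter_eq_right.2 (ball_subset_ball h), min_eq_right (measure_mono (ball_subset_ball h))]

theorem measure_inter_le_measure_ball_inter_ball {X : Type*} [PseudoMetricSpace X]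
    [MeasurableSpace X] {μ : Measure X} {A B : Set X} {x : X} {r₁ r₂ : ℝ}
    (hA : μ A = μ (ball x r₁)) (hB : μ B = μ (ball x r₂)) :
    μ (A ∩ B) ≤ μ (ball x r₁ ∩ ball x r₂) := by
  rw [measure_ball_inter_ball_eq_min, ← hA, ← hB]
  exact le_min (measure_mono inter_subset_left) (measure_mono inter_subset_right)

theorem stmt_6_general (N : ℕ)
    (f g fstar gstar : EuclideanSpace ℝ (Fin N) → ℝ)
    (hf : Measurable f) (hg : Measurable g)
    (hfstar : Measurable fstar) (hgstar : Measurable gstar)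
    (hfnonneg : ∀ x, 0 ≤ f x)
    (hfstarnonneg : ∀ x, 0 ≤ fstar x)
    (hfball : ∀ t : ℝ, 0 < t → ∃ r : ℝ,
      {x | t < fstar x} = Metric.ball (0 : EuclideanSpace ℝ (Fin N)) r)
    (hgball : ∀ t : ℝ, 0 < t → ∃ r : ℝ,
      {x | t < gstar x} = Metric.ball (0 : EuclideanSpace ℝ (Fin N)) r)
    (hfequi : ∀ t : ℝ, 0 < t → volume {x | t < fstar x} = volume {x | t < f x})
    (hgequi : ∀ t : ℝ, 0 < t → volume {x | t < gstar x} = volume {x | t < g x}) :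
    ∫⁻ x, ENNReal.ofReal (f x * g x) ≤ ∫⁻ x, ENNReal.ofReal (fstar x * gstar x) := by
  rw [lintegral_ofReal_mul_eq_setLIntegral_measure_inter volume hf hg hfnonneg,
    lintegral_ofReal_mul_eq_setLIntegral_measure_inter volume hfstar hgstar hfstarnonneg]
  refine setLIntegral_mono' (measurableSet_Ioi.prod measurableSet_Ioi) fun p ⟨hs, ht⟩ => ?_
  obtain ⟨r₁, hr₁⟩ := hfball p.1 hs
  obtain ⟨r₂, hr₂⟩ := hgball p.2 ht
  rw [hr₁, hr₂]
  exact measure_inter_le_measure_ball_inter_ball (hr₁ ▸ hfequi p.1 hs).symm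
    (hr₂ ▸ hgequi p.2 ht).symm

/-- Hardy–Littlewood inequality: for nonnegative measurable `f, g` vanishing at
infinity with symmetric decreasing rearrangements `f*, g*` (radially symmetric with
superlevel sets that are balls centred at the origin, equimeasurable with `f, g`),
one has `∫ f g ≤ ∫ f* g*`. -/
theorem stmt_6 (N : ℕ)
    (f g fstar gstar : EuclideanSpace ℝ (Fin N) → ℝ)
    (hf : Measurable f) (hg : Measurable g)
    (hfstar : Measurable fstar) (hgstar : Measurable gstar)
    (hfnonneg : ∀ x, 0 ≤ f x) (hgnonneg : ∀ x, 0 ≤ g x)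
    (hfstarnonneg : ∀ x, 0 ≤ fstar x) (hgstarnonneg : ∀ x, 0 ≤ gstar x)
    (hfvanish : ∀ t : ℝ, 0 < t → volume {x | t < f x} < ⊤)
    (hgvanish : ∀ t : ℝ, 0 < t → volume {x | t < g x} < ⊤)
    (hfball : ∀ t : ℝ, 0 < t → ∃ r : ℝ,
      {x | t < fstar x} = Metric.ball (0 : EuclideanSpace ℝ (Fin N)) r)
    (hgball : ∀ t : ℝ, 0 < t → ∃ r : ℝ,
      {x | t < gstar x} = Metric.ball (0 : EuclideanSpace ℝ (Fin N)) r)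
    (hfequi : ∀ t : ℝ, 0 < t → volume {x | t < fstar x} = volume {x | t < f x})
    (hgequi : ∀ t : ℝ, 0 < t → volume {x | t < gstar x} = volume {x | t < g x}) :
    ∫⁻ x, ENNReal.ofReal (f x * g x) ≤ ∫⁻ x, ENNReal.ofReal (fstar x * gstar x) :=
  stmt_6_general N f g fstar gstar hf hg hfstar hgstar hfnonneg hfstarnonneg hfball hgball hfequi
    hgequi
end
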